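/- Let W ⊆ V̂ ⊆ [n] and U = [n]∖V̂, fix a graph Ĝ with vertex set V̂, and fix a (possibly repeating) sequence v₁,…,v_t ∈ W. Let G be a uniformly random graph on [n] conditioned on G[V̂] = Ĝ, and let G′ = G*v₁*⋯*v_t. Partition the pairs of [n] via E₁ = {pairs inside V̂} ∪ {pairs with one end in W and one end in U} and E₂ = {pairs inside U} ∪ {pairs with one end in V̂∖W and one end in U}. Then E(G′)∩E₂ is uniformly distributed over subsets of E₂ and independent of E(G)∩E₁; that is, for every A ⊆ E₁ and every B ⊆ E₂, P[E(G)∩E₁ = A and E(G′)∩E₂ = B] = P[E(G)∩E₁ = A]·2^{−|E₂|}. -/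

import Mathlib

open Finset

variable {V : Type*}

/-- Local complementation at `v`: complement the induced subgraph on the
neighborhood of `v`. -/
def localComp (G : SimpleGraph V) (v : V) : SimpleGraph V where
  Adj u w := (G.Adj v u ∧ G.Adj v w ∧ u ≠ w ∧ ¬ G.Adj u w) ∨
    (¬ (G.Adj v u ∧ G.Adj v w) ∧ G.Adj u w)
  symm := by
    constructor
    intro u w h
    rcases h with ⟨h1, h2, h3, h4⟩ | ⟨h1, h2⟩
    · exact Or.inl ⟨h2, h1, h3.symm, fun a => h4 a.symm⟩
    · exact Or.inr ⟨fun hc => h1 ⟨hc.2, hc.1⟩, h2.symm⟩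
  loopless := by
    constructor
    rintro u (⟨-, -, h, -⟩ | ⟨-, h⟩)
    · exact h rfl
    · exact G.irrefl h

/-- Pivot at an edge `uv`: `G × uv = G * u * v * u`. -/
def pivotGraph (G : SimpleGraph V) (u v : V) : SimpleGraph V :=
  localComp (localComp (localComp G u) v) u

/-- Delete a vertex from a graph. -/
def deleteVertex (G : SimpleGraph V) (v : V) : SimpleGraph V where
  Adj a b := G.Adj a b ∧ a ≠ v ∧ b ≠ v
  symm := ⟨fun _ _ h => ⟨h.1.symm, h.2.2, h.2.1⟩⟩
  loopless := ⟨fun a h => G.irrefl h.1⟩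

/-!
Local complementation at `v` only toggles pairs inside the neighbourhood of `v`, so it commutes
with taking the symmetric difference with a graph `D` that has no edge at `v`:
`(G ∆ D) * v = (G * v) ∆ D`. No pair of `E₂` meets `W`, so toggling a set `C ⊆ E₂` of pairs in `G`
toggles exactly `C` in `G′`, and it changes neither `G[V̂]` nor `E(G) ∩ E₁`. Hence
`G ↦ (G ∆ C_G, C_G)`, where `C_G` is the set of pairs of `E₂` on which `E(G′)` and `B` disagree,
is a bijection from the graphs with `G[V̂] = Ĝ` and `E(G) ∩ E₁ = A` onto the product of those that
moreover satisfy `E(G′) ∩ E₂ = B` with the subsets of `E₂`.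
-/

open scoped symmDiff

namespace SimpleGraph

lemma symmDiff_adj {G H : SimpleGraph V} {u w : V} :
    (G ∆ H).Adj u w ↔ Xor (G.Adj u w) (H.Adj u w) :=
  Iff.rfl

lemma symmDiff_adj_iff_left {G H : SimpleGraph V} {u w : V} (h : ¬ H.Adj u w) :
    (G ∆ H).Adj u w ↔ G.Adj u w := by
  rw [symmDiff_adj, xor_def]
  tauto

lemma edgeSet_symmDiff (G H : SimpleGraph V) : (G ∆ H).edgeSet = G.edgeSet ∆ H.edgeSet := by
  simp [symmDiff_def, edgeSet_sup, edgeSet_sdiff]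

lemma edgeSet_symmDiff_inter_of_disjoint (G : SimpleGraph V) {H : SimpleGraph V}
    {E : Set (Sym2 V)} (h : Disjoint H.edgeSet E) : (G ∆ H).edgeSet ∩ E = G.edgeSet ∩ E := by
  rw [edgeSet_symmDiff, Set.inter_symmDiff_distrib_right, h.inter_eq, ← Set.bot_eq_empty,
    symmDiff_bot]

lemma edgeSet_fromEdgeSet_image_val {E : Set (Sym2 V)} (hE : ∀ e ∈ E, ¬ e.IsDiag) (C : Set E) :
    (fromEdgeSet (Subtype.val '' C)).edgeSet = Subtype.val '' C := by
  rw [edgeSet_fromEdgeSet, sdiff_eq_left, Set.disjoint_left]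
  rintro _ ⟨e, -, rfl⟩
  exact hE e e.2

end SimpleGraph

open SimpleGraph

lemma localComp_symmDiff (G D : SimpleGraph V) {v : V} (hD : ∀ u, ¬ D.Adj v u) :
    localComp (G ∆ D) v = localComp G v ∆ D := by
  ext u w
  have hne : D.Adj u w → u ≠ w := Adj.ne
  simp only [localComp, symmDiff_adj, hD, xor_def]
  tauto

lemma foldl_localComp_symmDiff (D : SimpleGraph V) {l : List V}
    (hD : ∀ v ∈ l, ∀ u, ¬ D.Adj v u) (G : SimpleGraph V) :
    l.foldl localComp (G ∆ D) = l.foldl localComp G ∆ D := by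
  induction l generalizing G with
  | nil => rfl
  | cons v l ih =>
    rw [List.foldl_cons, List.foldl_cons, localComp_symmDiff G D (hD v (by simp)),
      ih (fun v hv => hD v (by simp [hv]))]

section Counting

variable {E : Set (Sym2 V)}

lemma mem_edgeSet_foldl_localComp_symmDiff_fromEdgeSet (hE : ∀ e ∈ E, ¬ e.IsDiag)
    {l : List V} (hl : ∀ v ∈ l, ∀ u, s(v, u) ∉ E) (G : SimpleGraph V) (C : Set E) (e : E) :
    (e : Sym2 V) ∈ (l.foldl localComp (G ∆ fromEdgeSet (Subtype.val '' C))).edgeSet ↔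
      Xor ((e : Sym2 V) ∈ (l.foldl localComp G).edgeSet) (e ∈ C) := by
  have hD : ∀ v ∈ l, ∀ u, ¬ (fromEdgeSet (Subtype.val '' C)).Adj v u := fun v hv u hvu =>
    hl v hv u (Subtype.coe_image_subset E C
      (edgeSet_fromEdgeSet_image_val hE C ▸ (mem_edgeSet _).2 hvu))
  rw [foldl_localComp_symmDiff _ hD, edgeSet_symmDiff, Set.mem_symmDiff,
    edgeSet_fromEdgeSet_image_val hE, Subtype.val_injective.mem_set_image]
  rfl

theorem card_eq_card_foldl_localComp_edgeSet_inter_eq_mul [Fintype V]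
    (hE : ∀ e ∈ E, ¬ e.IsDiag) {l : List V} (hl : ∀ v ∈ l, ∀ u, s(v, u) ∉ E)
    {P : SimpleGraph V → Prop} (hP : ∀ G D, D.edgeSet ⊆ E → P G → P (G ∆ D))
    {B : Set (Sym2 V)} (hB : B ⊆ E) :
    Nat.card {G // P G} =
      Nat.card {G // P G ∧ (l.foldl localComp G).edgeSet ∩ E = B} * 2 ^ Nat.card E := by
  classical
  let D : Set E → SimpleGraph V := fun C => fromEdgeSet (Subtype.val '' C)
  let defect : SimpleGraph V → Set E := fun G =>
    {e | Xor ((e : Sym2 V) ∈ (l.foldl localComp G).edgeSet) ((e : Sym2 V) ∈ B)}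
  have hD : ∀ C, (D C).edgeSet ⊆ E := fun C =>
    (edgeSet_fromEdgeSet_image_val hE C).trans_subset (Subtype.coe_image_subset E C)
  have hfold := mem_edgeSet_foldl_localComp_symmDiff_fromEdgeSet hE hl
  have hfiber : ∀ G, (l.foldl localComp (G ∆ D (defect G))).edgeSet ∩ E = B := by
    intro G
    ext e
    constructor
    · rintro ⟨h, he⟩
      have := hfold G (defect G) ⟨e, he⟩
      simp only [defect, Set.mem_ofPred_eq, xor_def] at this
      tauto
    · intro h
      have := hfold G (defect G) ⟨e, hB h⟩
      simp only [defect, Set.mem_ofPred_eq, xor_def] at this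
      exact ⟨by tauto, hB h⟩
  have hdefect : ∀ H C, (l.foldl localComp H).edgeSet ∩ E = B → defect (H ∆ D C) = C := by
    intro H C hH
    ext ⟨e, he⟩
    have hB' : e ∈ (l.foldl localComp H).edgeSet ↔ e ∈ B := by
      rw [← hH]
      exact ⟨fun h => ⟨h, he⟩, And.left⟩
    have := hfold H C ⟨e, he⟩
    simp only [defect, D, Set.mem_ofPred_eq, xor_def] at this ⊢
    tauto
  let φ : {G // P G} ≃ {G // P G ∧ (l.foldl localComp G).edgeSet ∩ E = B} × Set E :=
    { toFun G := (⟨G ∆ D (defect G), hP _ _ (hD _) G.2, hfiber G⟩, defect G)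
      invFun p := ⟨p.1.1 ∆ D p.2, hP _ _ (hD _) p.1.2.1⟩
      left_inv G := Subtype.ext (symmDiff_symmDiff_cancel_right _ _)
      right_inv := by
        rintro ⟨⟨H, hPH, hH⟩, C⟩
        simp only [hdefect H C hH, symmDiff_symmDiff_cancel_right] }
  rw [Nat.card_congr φ, Nat.card_prod, Nat.card_eq_fintype_card (α := Set E), Fintype.card_set,
    ← Nat.card_eq_fintype_card]

end Counting

section EdgeClasses

variable [Fintype V] [DecidableEq V] {Vh W : Finset V} {e : Sym2 V}

/-- The class `E₁` of the statement. -/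
def pairsE₁ (Vh W : Finset V) : Set (Sym2 V) :=
  {e | ¬ e.IsDiag ∧ ∀ v ∈ e, v ∈ Vh} ∪ {e | ∃ u ∈ W, ∃ w ∈ Vhᶜ, e = s(u, w)}

/-- The class `E₂` of the statement. -/
def pairsE₂ (Vh W : Finset V) : Set (Sym2 V) :=
  {e | ¬ e.IsDiag ∧ ∀ v ∈ e, v ∈ Vhᶜ} ∪ {e | ∃ u ∈ Vh \ W, ∃ w ∈ Vhᶜ, e = s(u, w)}

lemma not_isDiag_of_mem_pairsE₂ (he : e ∈ pairsE₂ Vh W) : ¬ e.IsDiag := by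
  rcases he with ⟨hnd, -⟩ | ⟨u, hu, w, hw, rfl⟩
  · exact hnd
  · rw [Sym2.mk_isDiag_iff]
    rintro rfl
    exact Finset.mem_compl.1 hw (Finset.mem_sdiff.1 hu).1

lemma notMem_of_mem_pairsE₂ (hW : W ⊆ Vh) (he : e ∈ pairsE₂ Vh W) {v : V} (hv : v ∈ e) :
    v ∉ W := by
  intro hvW
  rcases he with ⟨-, hU⟩ | ⟨u, hu, w, hw, rfl⟩
  · exact Finset.mem_compl.1 (hU v hv) (hW hvW)
  · rcases Sym2.mem_iff.1 hv with rfl | rfl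
    · exact (Finset.mem_sdiff.1 hu).2 hvW
    · exact Finset.mem_compl.1 hw (hW hvW)

lemma mk_notMem_pairsE₂ {u w : V} (hu : u ∈ Vh) (hw : w ∈ Vh) : s(u, w) ∉ pairsE₂ Vh W := by
  rintro (⟨-, hU⟩ | ⟨a, -, b, hb, heq⟩)
  · exact Finset.mem_compl.1 (hU u (Sym2.mem_mk_left u w)) hu
  · rcases Sym2.mem_iff.1 (heq ▸ Sym2.mem_mk_right a b) with rfl | rfl <;>
      exact Finset.mem_compl.1 hb ‹_›

lemma disjoint_pairsE₁_pairsE₂ (hW : W ⊆ Vh) : Disjoint (pairsE₁ Vh W) (pairsE₂ Vh W) := by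
  rw [Set.disjoint_left]
  rintro ⟨a, b⟩ (⟨-, hVh⟩ | ⟨u, hu, w, -, heq⟩) he
  · exact mk_notMem_pairsE₂ (hVh a (Sym2.mem_mk_left a b)) (hVh b (Sym2.mem_mk_right a b)) he
  · exact notMem_of_mem_pairsE₂ hW he (heq ▸ Sym2.mem_mk_left u w) hu

end EdgeClasses

theorem complementing_independence_general (n : ℕ) (Vh W : Finset (Fin n)) (hW : W ⊆ Vh)
    (Ghat : SimpleGraph (Fin n))
    (l : List (Fin n)) (hl : ∀ v ∈ l, v ∈ W)
    (E1 E2 : Set (Sym2 (Fin n)))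
    (hE1 : E1 = {e | ¬ e.IsDiag ∧ ∀ v ∈ e, v ∈ Vh} ∪
      {e | ∃ u ∈ W, ∃ w ∈ (Vhᶜ : Finset (Fin n)), e = s(u, w)})
    (hE2 : E2 = {e | ¬ e.IsDiag ∧ ∀ v ∈ e, v ∈ (Vhᶜ : Finset (Fin n))} ∪
      {e | ∃ u ∈ Vh \ W, ∃ w ∈ (Vhᶜ : Finset (Fin n)), e = s(u, w)})
    (A B : Set (Sym2 (Fin n))) (hB : B ⊆ E2) :
    (Nat.card {G : SimpleGraph (Fin n) //
        (∀ u ∈ Vh, ∀ w ∈ Vh, (G.Adj u w ↔ Ghat.Adj u w)) ∧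
        G.edgeSet ∩ E1 = A ∧ (l.foldl localComp G).edgeSet ∩ E2 = B} : ℝ) /
      (Nat.card {G : SimpleGraph (Fin n) //
        ∀ u ∈ Vh, ∀ w ∈ Vh, (G.Adj u w ↔ Ghat.Adj u w)} : ℝ)
    = (Nat.card {G : SimpleGraph (Fin n) //
        (∀ u ∈ Vh, ∀ w ∈ Vh, (G.Adj u w ↔ Ghat.Adj u w)) ∧
        G.edgeSet ∩ E1 = A} : ℝ) /
      (Nat.card {G : SimpleGraph (Fin n) //
        ∀ u ∈ Vh, ∀ w ∈ Vh, (G.Adj u w ↔ Ghat.Adj u w)} : ℝ) *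
      ((2 : ℝ) ^ (Nat.card ↥E2))⁻¹ := by
  have hdiag : ∀ e ∈ E2, ¬ e.IsDiag := by
    subst hE2
    exact fun e => not_isDiag_of_mem_pairsE₂
  have hW2 : ∀ e ∈ E2, ∀ v ∈ e, v ∉ W := by
    subst hE2
    exact fun e => notMem_of_mem_pairsE₂ hW
  have hVh2 : ∀ u ∈ Vh, ∀ w ∈ Vh, s(u, w) ∉ E2 := by
    subst hE2
    exact fun u hu w hw => mk_notMem_pairsE₂ hu hw
  have hdisj : Disjoint E1 E2 := by
    subst hE1 hE2
    exact disjoint_pairsE₁_pairsE₂ hW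
  have hcount := card_eq_card_foldl_localComp_edgeSet_inter_eq_mul hdiag (l := l)
    (fun v hv u h => hW2 _ h v (Sym2.mem_mk_left v u) (hl v hv))
    (P := fun G => (∀ u ∈ Vh, ∀ w ∈ Vh, (G.Adj u w ↔ Ghat.Adj u w)) ∧ G.edgeSet ∩ E1 = A)
    (fun G D hD ⟨hGhat, hGA⟩ => ⟨fun u hu w hw =>
      (symmDiff_adj_iff_left fun h => hVh2 u hu w hw (hD h)).trans (hGhat u hu w hw),
      (G.edgeSet_symmDiff_inter_of_disjoint (Set.disjoint_of_subset_left hD hdisj.symm)).trans hGA⟩)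
    hB
  rw [hcount, Nat.card_congr (Equiv.subtypeEquivRight fun _ => and_assoc)]
  push_cast
  field_simp

/-- Conditional independence under local complementations. Let `W ⊆ V̂ ⊆ [n]`,
`U = [n] ∖ V̂`, fix a graph `Ĝ` on `V̂` and a sequence `v₁, …, v_t ∈ W`. Let
`G` be uniformly random conditioned on `G[V̂] = Ĝ` and `G′ = G*v₁*⋯*v_t`.
With `E₁` the pairs inside `V̂` together with the pairs between `W` and `U`,
and `E₂` the pairs inside `U` together with the pairs between `V̂ ∖ W` and `U`,
for every `A ⊆ E₁` and `B ⊆ E₂` we have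
`P[E(G)∩E₁ = A ∧ E(G′)∩E₂ = B] = P[E(G)∩E₁ = A]·2^{−|E₂|}`. -/
theorem complementing_independence (n : ℕ) (Vh W : Finset (Fin n)) (hW : W ⊆ Vh)
    (Ghat : SimpleGraph (Fin n)) (hGhat : ∀ u w, Ghat.Adj u w → u ∈ Vh ∧ w ∈ Vh)
    (l : List (Fin n)) (hl : ∀ v ∈ l, v ∈ W)
    (E1 E2 : Set (Sym2 (Fin n)))
    (hE1 : E1 = {e | ¬ e.IsDiag ∧ ∀ v ∈ e, v ∈ Vh} ∪
      {e | ∃ u ∈ W, ∃ w ∈ (Vhᶜ : Finset (Fin n)), e = s(u, w)})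
    (hE2 : E2 = {e | ¬ e.IsDiag ∧ ∀ v ∈ e, v ∈ (Vhᶜ : Finset (Fin n))} ∪
      {e | ∃ u ∈ Vh \ W, ∃ w ∈ (Vhᶜ : Finset (Fin n)), e = s(u, w)})
    (A B : Set (Sym2 (Fin n))) (hA : A ⊆ E1) (hB : B ⊆ E2) :
    (Nat.card {G : SimpleGraph (Fin n) //
        (∀ u ∈ Vh, ∀ w ∈ Vh, (G.Adj u w ↔ Ghat.Adj u w)) ∧
        G.edgeSet ∩ E1 = A ∧ (l.foldl localComp G).edgeSet ∩ E2 = B} : ℝ) /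
      (Nat.card {G : SimpleGraph (Fin n) //
        ∀ u ∈ Vh, ∀ w ∈ Vh, (G.Adj u w ↔ Ghat.Adj u w)} : ℝ)
    = (Nat.card {G : SimpleGraph (Fin n) //
        (∀ u ∈ Vh, ∀ w ∈ Vh, (G.Adj u w ↔ Ghat.Adj u w)) ∧
        G.edgeSet ∩ E1 = A} : ℝ) /
      (Nat.card {G : SimpleGraph (Fin n) //
        ∀ u ∈ Vh, ∀ w ∈ Vh, (G.Adj u w ↔ Ghat.Adj u w)} : ℝ) *
      ((2 : ℝ) ^ (Nat.card ↥E2))⁻¹ :=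
  complementing_independence_general n Vh W hW Ghat l hl E1 E2 hE1 hE2 A B hB
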